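/- Let M be a matching in a graph H', and suppose there is a multicommodity flow F in H' routing δ' units of flow between the endpoints of each edge of M, with congestion at most δ'/2 on every edge (δ' > 0), and with all flow paths of length at most t. Then some flow path of F avoids all edges of M; in particular, there exist u, v with {u,v} ∈ M and a path of length at most t from u to v in H' using no edge of M, so d_{H'−M}(u,v) ≤ t. -/
import Mathlib


open Finset

/-- If `M` is a nonempty matching in `H'` and a multicommodity flow `F`
routes `δ'` units between the endpoints of every matching edge along paths of length at
most `t`, with congestion at most `δ'/2` on every edge, then some edge `{u,v} ∈ M` admits
a path of length at most `t` between its endpoints avoiding all edges of `M`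
(i.e. `d_{H'−M}(u,v) ≤ t`). -/
theorem stmt8 {V : Type*} [Fintype V] [DecidableEq V] (H' : SimpleGraph V) [DecidableRel H'.Adj]
    (M : SimpleGraph V) (hMH : M ≤ H')
    (hmatch : ∀ u v w : V, M.Adj u v → M.Adj u w → v = w)
    (hMne : ∃ a b : V, M.Adj a b)
    (t : ℕ) (δ' : ℝ) (hδ' : 0 < δ')
    (F : ∀ u v : V, H'.Path u v → ℝ)
    (hFnonneg : ∀ u v (p : H'.Path u v), 0 ≤ F u v p)
    (hdilation : ∀ u v (p : H'.Path u v), 0 < F u v p → (p : H'.Walk u v).length ≤ t)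
    (hroute : ∀ u v : V, M.Adj u v → ∑ p : H'.Path u v, F u v p = δ')
    (hcongest : ∀ e ∈ H'.edgeFinset,
      (∑ u : V, ∑ v : V, ∑ p : H'.Path u v,
        if e ∈ (p : H'.Walk u v).edges then F u v p else 0) ≤ δ' / 2) :
    ∃ u v : V, M.Adj u v ∧ ∃ p : H'.Walk u v, p.IsPath ∧ p.length ≤ t ∧
      ∀ e ∈ p.edges, e ∉ M.edgeSet := by
  classical
  by_contra hcon
  push_neg at hcon
  -- hcon : ∀ u v, M.Adj u v → ∀ p, p.IsPath → p.length ≤ t → ∃ e ∈ p.edges, e ∈ M.edgeSet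
  set K : Finset (Sym2 V) := M.edgeFinset with hKdef
  have hK : K ⊆ H'.edgeFinset := SimpleGraph.edgeFinset_mono hMH
  -- the double-counted sum
  set S : ℝ := ∑ e ∈ K, ∑ u : V, ∑ v : V, ∑ p : H'.Path u v,
      if e ∈ (p : H'.Walk u v).edges then F u v p else 0 with hSdef
  have hupper : S ≤ (K.card : ℝ) * (δ' / 2) := by
    calc S ≤ ∑ _e ∈ K, δ' / 2 := Finset.sum_le_sum (fun e he => hcongest e (hK he))
      _ = (K.card : ℝ) * (δ' / 2) := by rw [Finset.sum_const, nsmul_eq_mul]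
  have hswap : S = ∑ u : V, ∑ v : V, ∑ p : H'.Path u v, ∑ e ∈ K,
      (if e ∈ (p : H'.Walk u v).edges then F u v p else 0) := by
    rw [hSdef, Finset.sum_comm]
    refine Finset.sum_congr rfl fun u _ => ?_
    rw [Finset.sum_comm]
    exact Finset.sum_congr rfl fun v _ => Finset.sum_comm
  have hinner : ∀ u v (p : H'.Path u v),
      (if M.Adj u v then F u v p else 0) ≤ ∑ e ∈ K,
        (if e ∈ (p : H'.Walk u v).edges then F u v p else 0) := by
    intro u v p
    have hnn : ∀ e ∈ K, (0:ℝ) ≤ if e ∈ (p : H'.Walk u v).edges then F u v p else 0 := by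
      intro e _
      split
      · exact hFnonneg u v p
      · exact le_refl 0
    split_ifs with h
    · rcases eq_or_lt_of_le (hFnonneg u v p) with h0 | h0
      · exact le_trans (le_of_eq h0.symm) (Finset.sum_nonneg hnn)
      · obtain ⟨e, hep, heM⟩ := hcon u v h (p : H'.Walk u v) p.2 (hdilation u v p h0)
        have heK : e ∈ K := SimpleGraph.mem_edgeFinset.mpr heM
        have := Finset.single_le_sum hnn heK
        rwa [if_pos hep] at this
    · exact Finset.sum_nonneg hnn
  have hlower : (∑ u : V, ∑ v : V, (if M.Adj u v then δ' else 0)) ≤ S := by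
    rw [hswap]
    refine Finset.sum_le_sum fun u _ => Finset.sum_le_sum fun v _ => ?_
    by_cases h : M.Adj u v
    · rw [if_pos h, ← hroute u v h]
      exact Finset.sum_le_sum fun p _ => le_trans (le_of_eq (if_pos h).symm) (hinner u v p)
    · rw [if_neg h]
      exact Finset.sum_nonneg fun p _ =>
        le_trans (le_of_eq (if_neg h).symm) (hinner u v p)
  have hcount : (∑ u : V, ∑ v : V, (if M.Adj u v then δ' else 0))
      = (2 * K.card : ℝ) * δ' := by
    have h1 : ∀ u : V, (∑ v : V, (if M.Adj u v then δ' else 0)) = (M.degree u : ℝ) * δ' := by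
      intro u
      rw [Finset.sum_ite, Finset.sum_const, Finset.sum_const, smul_zero, add_zero,
        nsmul_eq_mul]
      congr 2
      rw [SimpleGraph.degree, SimpleGraph.neighborFinset_eq_filter]
    rw [Finset.sum_congr rfl fun u _ => h1 u, ← Finset.sum_mul]
    congr 1
    have h2 := SimpleGraph.sum_degrees_eq_twice_card_edges M
    have h3 : ((∑ v : V, M.degree v : ℕ) : ℝ) = ∑ i : V, (M.degree i : ℝ) := by push_cast; rfl
    rw [← h3, h2]
    push_cast
    rfl
  have hk1 : (1:ℝ) ≤ (K.card : ℝ) := by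
    obtain ⟨a, b, hab⟩ := hMne
    have : s(a, b) ∈ K := SimpleGraph.mem_edgeFinset.mpr hab
    exact_mod_cast Finset.card_pos.mpr ⟨_, this⟩
  rw [hcount] at hlower
  nlinarith [hlower.trans hupper]
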